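/- arXiv:2506.02978 — 3 statements merged into one kernel-verified Lean document; each statement's English description precedes it below -/
import Mathlib

section
/- Let F : ℝ^d → ℝ be differentiable with L-Lipschitz gradient (L > 0) and F ≥ 0. Let α₀ > 0, β > 0, and let (x_t) be a sequence with x_{t+1} = x_t + η_t·d_t, where the directions satisfy ⟨∇F(x_t), d_t⟩ ≤ −α₀·‖∇F(x_t)‖² and ‖d_t‖ ≤ β·‖∇F(x_t)‖ for all t, and the step sizes satisfy η_t ≥ 0 and η_t → 0. Then there exists t₁ ∈ ℕ such that F(x_{t+1}) ≤ F(x_t) − (α₀/2)·η_t·‖∇F(x_t)‖² for all t ≥ t₁, and consequently the series ∑_{t=0}^∞ η_t·‖∇F(x_t)‖² converges. -/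
/-!
By the mean value inequality, an `L`-Lipschitz gradient gives
`F (x + v) ≤ F x + ⟪∇F x, v⟫ + L‖v‖²`. For the step `v = ηₜ dₜ` the inner product contributes at
most `-α₀ ηₜ ‖∇F xₜ‖²` and the quadratic term at most `L β² ηₜ² ‖∇F xₜ‖²`; once `ηₜ → 0` has made
`L β² ηₜ ≤ α₀ / 2`, the quadratic term eats at most half of the decrease. Telescoping this
eventual decrease against `F ≥ 0` bounds the partial sums of `ηₜ ‖∇F xₜ‖²` by `2 F(x_{t₁}) / α₀`.
-/

open Filter RealInnerProductSpace

section Descent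

variable {E : Type*} [NormedAddCommGroup E] [InnerProductSpace ℝ E] [CompleteSpace E]

theorem norm_fderiv_sub_fderiv_eq_norm_gradient_sub_gradient (f : E → ℝ) (x y : E) :
    ‖fderiv ℝ f x - fderiv ℝ f y‖ = ‖gradient f x - gradient f y‖ := by
  rw [← (InnerProductSpace.toDual ℝ E).symm.norm_map, map_sub]
  rfl

theorem fderiv_apply_eq_inner_gradient (f : E → ℝ) (x v : E) :
    fderiv ℝ f x v = ⟪gradient f x, v⟫ := by
  rw [gradient, InnerProductSpace.toDual_symm_apply]

/-- The descent lemma, with the constant `L` given by the mean value inequality on `[x, x + v]`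
rather than the sharp `L / 2`. -/
theorem le_add_inner_gradient_add_mul_norm_sq {f : E → ℝ} {L : ℝ} (hL : 0 ≤ L)
    (hf : Differentiable ℝ f) (hLip : ∀ x y, ‖gradient f x - gradient f y‖ ≤ L * ‖x - y‖)
    (x v : E) : f (x + v) ≤ f x + ⟪gradient f x, v⟫ + L * ‖v‖ ^ 2 := by
  have hderiv : ∀ z ∈ segment ℝ x (x + v), ‖fderiv ℝ f z - fderiv ℝ f x‖ ≤ L * ‖v‖ := by
    rintro _ ⟨a, b, ha, hb, hab, rfl⟩
    have hz : a • x + b • (x + v) - x = b • v := by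
      rw [eq_sub_of_add_eq hab]; module
    rw [norm_fderiv_sub_fderiv_eq_norm_gradient_sub_gradient]
    calc ‖gradient f (a • x + b • (x + v)) - gradient f x‖
        ≤ L * ‖a • x + b • (x + v) - x‖ := hLip _ x
      _ = L * (b * ‖v‖) := by rw [hz, norm_smul, Real.norm_of_nonneg hb]
      _ ≤ L * ‖v‖ := by
          gcongr
          exact mul_le_of_le_one_left (norm_nonneg v) (by linarith)
  have hmvt := (convex_segment x (x + v)).norm_image_sub_le_of_norm_fderiv_le'
    (fun z _ => hf z) hderiv (left_mem_segment ℝ x (x + v)) (right_mem_segment ℝ x (x + v))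
  rw [add_sub_cancel_left, fderiv_apply_eq_inner_gradient] at hmvt
  linarith [le_of_abs_le (Real.norm_eq_abs _ ▸ hmvt)]

theorem le_sub_mul_norm_gradient_sq_of_gradient_related {f : E → ℝ} {L α β η : ℝ} (hL : 0 ≤ L)
    (hf : Differentiable ℝ f) (hLip : ∀ x y, ‖gradient f x - gradient f y‖ ≤ L * ‖x - y‖)
    {x d : E} (hcorr : ⟪gradient f x, d⟫ ≤ -α * ‖gradient f x‖ ^ 2)
    (hnorm : ‖d‖ ≤ β * ‖gradient f x‖) (hη : 0 ≤ η) (hsmall : L * β ^ 2 * η ≤ α / 2) :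
    f (x + η • d) ≤ f x - α / 2 * η * ‖gradient f x‖ ^ 2 := by
  set g := ‖gradient f x‖
  have hinner : ⟪gradient f x, η • d⟫ ≤ -α * η * g ^ 2 := by
    rw [real_inner_smul_right]
    linarith [mul_le_mul_of_nonneg_left hcorr hη]
  have hnorm_sq : ‖η • d‖ ^ 2 ≤ η ^ 2 * (β * g) ^ 2 := by
    rw [norm_smul, Real.norm_of_nonneg hη, mul_pow]
    gcongr
  have hquad : L * ‖η • d‖ ^ 2 ≤ α / 2 * η * g ^ 2 :=
    calc L * ‖η • d‖ ^ 2 ≤ L * (η ^ 2 * (β * g) ^ 2) := by gcongr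
      _ = (L * β ^ 2 * η) * (η * g ^ 2) := by ring
      _ ≤ α / 2 * (η * g ^ 2) := by gcongr
      _ = α / 2 * η * g ^ 2 := by ring
  linarith [le_add_inner_gradient_add_mul_norm_sq hL hf hLip x (η • d)]

end Descent

theorem summable_of_eventually_le_sub_mul {u a : ℕ → ℝ} {c : ℝ} (hc : 0 < c)
    (hu : ∀ n, 0 ≤ u n) (ha : ∀ n, 0 ≤ a n) (h : ∀ᶠ n in atTop, u (n + 1) ≤ u n - c * a n) :
    Summable a := by
  obtain ⟨N, hN⟩ := eventually_atTop.mp h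
  rw [← summable_nat_add_iff N]
  refine summable_of_sum_range_le (fun n => ha _) (c := u N / c) fun n => ?_
  have htele : c * ∑ i ∈ Finset.range n, a (i + N) ≤ u N - u (n + N) := by
    induction n with
    | zero => simp
    | succ n ih =>
      rw [Finset.sum_range_succ, mul_add, Nat.succ_add]
      linarith [hN (n + N) (Nat.le_add_left N n)]
  rw [le_div_iff₀ hc, mul_comm]
  linarith [hu (n + N)]

theorem aicl_eventual_gradient_decrease_and_summability_general
    (dim : ℕ) (F : EuclideanSpace ℝ (Fin dim) → ℝ) (L α₀ β : ℝ)
    (hL : 0 < L) (hα₀ : 0 < α₀)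
    (hF : Differentiable ℝ F) (hF_nonneg : ∀ x, 0 ≤ F x)
    (hLip : ∀ x y, ‖gradient F x - gradient F y‖ ≤ L * ‖x - y‖)
    (x : ℕ → EuclideanSpace ℝ (Fin dim))
    (dvec : ℕ → EuclideanSpace ℝ (Fin dim)) (η : ℕ → ℝ)
    (hstep : ∀ t, x (t + 1) = x t + η t • dvec t)
    (hcorr : ∀ t, ⟪gradient F (x t), dvec t⟫ ≤ -α₀ * ‖gradient F (x t)‖ ^ 2)
    (hnorm : ∀ t, ‖dvec t‖ ≤ β * ‖gradient F (x t)‖)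
    (hη_nonneg : ∀ t, 0 ≤ η t)
    (hη_lim : Tendsto η atTop (nhds 0)) :
    (∃ t₁ : ℕ, ∀ t ≥ t₁,
        F (x (t + 1)) ≤ F (x t) - α₀ / 2 * η t * ‖gradient F (x t)‖ ^ 2) ∧
      Summable (fun t => η t * ‖gradient F (x t)‖ ^ 2) := by
  have hsmall : ∀ᶠ t in atTop, L * β ^ 2 * η t ≤ α₀ / 2 := by
    have hlim : Tendsto (fun t => L * β ^ 2 * η t) atTop (nhds 0) := by
      simpa using hη_lim.const_mul (L * β ^ 2)
    exact hlim.eventually (ge_mem_nhds (by positivity))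
  have hdesc : ∀ᶠ t in atTop,
      F (x (t + 1)) ≤ F (x t) - α₀ / 2 * η t * ‖gradient F (x t)‖ ^ 2 :=
    hsmall.mono fun t ht => hstep t ▸ le_sub_mul_norm_gradient_sq_of_gradient_related hL.le hF
      hLip (hcorr t) (hnorm t) (hη_nonneg t) ht
  refine ⟨eventually_atTop.mp hdesc, ?_⟩
  refine summable_of_eventually_le_sub_mul (half_pos hα₀) (fun t => hF_nonneg (x t))
    (fun t => mul_nonneg (hη_nonneg t) (sq_nonneg _)) ?_
  simpa only [mul_assoc] using hdesc

/-- Per-iterate decrease in terms of the gradient (Lemma 5 of the AICL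
convergence analysis): with `F ≥ 0` differentiable with `L`-Lipschitz
gradient, gradient-related directions (`⟪∇F xₜ, dₜ⟫ ≤ -α₀·‖∇F xₜ‖²`,
`‖dₜ‖ ≤ β·‖∇F xₜ‖`) and step sizes `ηₜ ≥ 0` with `ηₜ → 0`, eventually
`F (x (t+1)) ≤ F (x t) - (α₀/2)·ηₜ·‖∇F xₜ‖²`, and consequently
`∑ ηₜ·‖∇F xₜ‖²` converges. -/
theorem aicl_eventual_gradient_decrease_and_summability
    (dim : ℕ) (F : EuclideanSpace ℝ (Fin dim) → ℝ) (L α₀ β : ℝ)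
    (hL : 0 < L) (hα₀ : 0 < α₀) (hβ : 0 < β)
    (hF : Differentiable ℝ F) (hF_nonneg : ∀ x, 0 ≤ F x)
    (hLip : ∀ x y, ‖gradient F x - gradient F y‖ ≤ L * ‖x - y‖)
    (x : ℕ → EuclideanSpace ℝ (Fin dim))
    (dvec : ℕ → EuclideanSpace ℝ (Fin dim)) (η : ℕ → ℝ)
    (hstep : ∀ t, x (t + 1) = x t + η t • dvec t)
    (hcorr : ∀ t, ⟪gradient F (x t), dvec t⟫ ≤ -α₀ * ‖gradient F (x t)‖ ^ 2)
    (hnorm : ∀ t, ‖dvec t‖ ≤ β * ‖gradient F (x t)‖)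
    (hη_nonneg : ∀ t, 0 ≤ η t)
    (hη_lim : Tendsto η atTop (nhds 0)) :
    (∃ t₁ : ℕ, ∀ t ≥ t₁,
        F (x (t + 1)) ≤ F (x t) - α₀ / 2 * η t * ‖gradient F (x t)‖ ^ 2) ∧
      Summable (fun t => η t * ‖gradient F (x t)‖ ^ 2) :=
  aicl_eventual_gradient_decrease_and_summability_general dim F L α₀ β hL hα₀ hF hF_nonneg hLip x
    dvec η hstep hcorr hnorm hη_nonneg hη_lim
end

section
/- Let (η_t) be a sequence of nonnegative reals with ∑_{t=0}^∞ η_t = ∞, let (c_t) be a sequence of nonnegative reals with ∑_{t=0}^∞ η_t·c_t² < ∞, and suppose there exists M > 0 such that |c_{t+1} − c_t| ≤ M·η_t·c_t for all t. Then c_t → 0 as t → ∞. -/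
open Filter Finset

/-!
Since `∑ η t = ∞` while `∑ η t * c t ^ 2 < ∞`, the sequence `c` cannot stay above any
level `δ > 0`, so it keeps returning below `ε / 2`. While `c ≥ ε / 2`, each step loses at most
`M * η t * c t ≤ (2 * M / ε) * η t * c t ^ 2`, so a descent from `ε` to below `ε / 2` uses up
a block of `∑ η t * c t ^ 2` of size at least `ε ^ 2 / (4 * M)`. The tails of a convergent
series eventually cannot pay for that, so `c` is eventually below `ε`.
-/

theorem frequently_lt_of_summable_mul {η f : ℕ → ℝ} (hη : ∀ t, 0 ≤ η t)
    (hη_div : Tendsto (fun n => ∑ t ∈ range n, η t) atTop atTop)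
    (hsum : Summable fun t => η t * f t) {δ : ℝ} (hδ : 0 < δ) :
    ∃ᶠ t in atTop, f t < δ := by
  by_contra! hge
  have hbound : ∀ᶠ t in atTop, ‖η t‖ ≤ δ⁻¹ * (η t * f t) := by
    filter_upwards [hge] with t ht
    rw [Real.norm_of_nonneg (hη t), ← div_eq_inv_mul, le_div_iff₀ hδ]
    exact mul_le_mul_of_nonneg_left ht (hη t)
  have hη_sum : Summable η := .of_norm_bounded_eventually_nat (hsum.mul_left δ⁻¹) hbound
  exact not_tendsto_atTop_of_tendsto_nhds hη_sum.hasSum.tendsto_sum_nat hη_div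

theorem Summable.exists_sum_Ico_lt {f : ℕ → ℝ} (hf : Summable f) {ε : ℝ} (hε : 0 < ε) :
    ∃ N, ∀ u v, N ≤ u → u ≤ v → ∑ t ∈ Ico u v, f t < ε := by
  obtain ⟨N, hN⟩ := Metric.cauchySeq_iff.1 hf.hasSum.tendsto_sum_nat.cauchySeq ε hε
  refine ⟨N, fun u v hu huv => ?_⟩
  rw [sum_Ico_eq_sub _ huv]
  exact (le_abs_self _).trans_lt (hN v (hu.trans huv) u hu)

theorem sub_le_div_mul_sum_Ico_of_le {η c : ℕ → ℝ} {M δ : ℝ} (hM : 0 ≤ M) (hδ : 0 < δ)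
    (hη : ∀ t, 0 ≤ η t) (hslow : ∀ t, |c (t + 1) - c t| ≤ M * η t * c t)
    {u v : ℕ} (huv : u ≤ v) (hge : ∀ t ∈ Ico u v, δ ≤ c t) :
    c u - c v ≤ M / δ * ∑ t ∈ Ico u v, η t * c t ^ 2 := by
  induction v, huv using Nat.le_induction with
  | base => simp
  | succ v huv ih =>
    have hcv : δ ≤ c v := hge v (mem_Ico.2 ⟨huv, v.lt_succ_self⟩)
    have hstep : c v - c (v + 1) ≤ M / δ * (η v * c v ^ 2) := calc
      c v - c (v + 1) ≤ M * η v * c v := by linarith [neg_abs_le (c (v + 1) - c v), hslow v]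
      _ ≤ M * η v * c v * (c v / δ) := le_mul_of_one_le_right
          (mul_nonneg (mul_nonneg hM (hη v)) (hδ.le.trans hcv)) ((one_le_div hδ).2 hcv)
      _ = M / δ * (η v * c v ^ 2) := by ring
    have hprev := ih fun t ht => hge t (Ico_subset_Ico_right v.le_succ ht)
    rw [sum_Ico_succ_top huv, mul_add]
    linarith

theorem eventually_lt_of_summable_mul_sq {η c : ℕ → ℝ} {M : ℝ} (hM : 0 < M)
    (hη : ∀ t, 0 ≤ η t) (hη_div : Tendsto (fun n => ∑ t ∈ range n, η t) atTop atTop)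
    (hsum : Summable fun t => η t * c t ^ 2) (hslow : ∀ t, |c (t + 1) - c t| ≤ M * η t * c t)
    {ε : ℝ} (hε : 0 < ε) : ∀ᶠ t in atTop, c t < ε := by
  classical
  obtain ⟨N, hN⟩ := hsum.exists_sum_Ico_lt (ε := ε ^ 2 / (4 * M)) (by positivity)
  filter_upwards [eventually_ge_atTop N] with u hu
  by_contra! hcu
  have hfreq := frequently_lt_of_summable_mul hη hη_div hsum (pow_pos (half_pos hε) 2)
  have hreturn : ∃ v, u ≤ v ∧ c v < ε / 2 := (hfreq.forall_exists_of_atTop u).imp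
    fun v ⟨huv, hv⟩ => ⟨huv, lt_of_pow_lt_pow_left₀ 2 (half_pos hε).le hv⟩
  obtain ⟨huv, hcv⟩ := Nat.find_spec hreturn
  have hge : ∀ t ∈ Ico u (Nat.find hreturn), ε / 2 ≤ c t := fun t ht => by
    rw [mem_Ico] at ht
    by_contra! hct
    exact Nat.find_min hreturn ht.2 ⟨ht.1, hct⟩
  have hdrop := sub_le_div_mul_sum_Ico_of_le hM.le (half_pos hε) hη hslow huv hge
  have hcost : M / (ε / 2) * ∑ t ∈ Ico u (Nat.find hreturn), η t * c t ^ 2 < ε / 2 := calc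
    _ < M / (ε / 2) * (ε ^ 2 / (4 * M)) :=
      mul_lt_mul_of_pos_left (hN u _ hu huv) (by positivity)
    _ = ε / 2 := by field_simp; ring
  linarith

/-- Auxiliary fact upgrading the liminf statement to a full limit in Lemma 5
of the AICL convergence analysis: if `η t ≥ 0` with divergent partial sums,
`c t ≥ 0` with `∑ η t * c t ^ 2 < ∞`, and `|c (t+1) - c t| ≤ M * η t * c t`
for some `M > 0`, then `c t → 0`. -/
theorem aicl_gradient_norm_tendsto_zero_aux
    (η c : ℕ → ℝ)
    (hη_nonneg : ∀ t, 0 ≤ η t) (hc_nonneg : ∀ t, 0 ≤ c t)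
    (hη_div : Tendsto (fun n : ℕ => ∑ t ∈ Finset.range n, η t) atTop atTop)
    (hsum : Summable (fun t => η t * c t ^ 2))
    (M : ℝ) (hM : 0 < M)
    (hslow : ∀ t, |c (t + 1) - c t| ≤ M * η t * c t) :
    Tendsto c atTop (nhds 0) := by
  refine tendsto_order.2 ⟨fun a ha => .of_forall fun t => ha.trans_le (hc_nonneg t), ?_⟩
  exact fun ε hε => eventually_lt_of_summable_mul_sq hM hη_nonneg hη_div hsum hslow hε
end

section
/- Let F : ℝ^d → ℝ be differentiable with L-Lipschitz gradient (L > 0) and F ≥ 0, let α₀ > 0 and β > 0, and let (x_t) be a sequence with x_{t+1} = x_t + η_t·d_t, where the directions satisfy ⟨∇F(x_t), d_t⟩ ≤ −α₀·‖∇F(x_t)‖² and ‖d_t‖ ≤ β·‖∇F(x_t)‖ for all t, and the step sizes are η_t = η₀/(1+t)^α with η₀ > 0 and 1/2 < α ≤ 1. Then ‖x_{t+1} − x_t‖ → 0 and ‖∇F(x_t)‖ → 0 as t → ∞; that is, the AICL iterations converge in the sense of the Main Convergence Theorem. -/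
/-!
Once `η t` is small, the descent lemma shows that each step lowers `F` by at least
`(α₀ / 2) η t ‖∇F (x t)‖²`; as `F ≥ 0`, the series `∑ η t ‖∇F (x t)‖²` converges. The Lipschitz
gradient gives `‖∇F (x (t+1))‖² ≤ ‖∇F (x t)‖² + O(η t ‖∇F (x t)‖²)`, so `‖∇F (x t)‖²` is a summably
perturbed decreasing sequence and converges; since `∑ η t = ∞` (this is where `α ≤ 1` enters),
its limit is `0`. The steps vanish because `‖x (t+1) - x t‖ ≤ β η t ‖∇F (x t)‖`.
-/

open Filter Topology RealInnerProductSpace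

section RealSequences

lemma summable_of_eventually_le_sub_succ {f u : ℕ → ℝ} (hf : ∀ t, 0 ≤ f t) (hu : ∀ t, 0 ≤ u t)
    (h : ∀ᶠ t in atTop, u t ≤ f t - f (t + 1)) : Summable u := by
  obtain ⟨T, hT⟩ := eventually_atTop.1 h
  rw [← summable_nat_add_iff T]
  refine summable_of_sum_range_le (c := f T) (fun t => hu _) fun n => ?_
  calc ∑ i ∈ Finset.range n, u (i + T)
      ≤ ∑ i ∈ Finset.range n, (f (i + T) - f (i + 1 + T)) :=
        Finset.sum_le_sum fun i _ => by
          simpa only [Nat.add_right_comm i T 1] using hT (i + T) (Nat.le_add_left T i)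
    _ = f T - f (n + T) := by simpa using Finset.sum_range_sub' (fun i => f (i + T)) n
    _ ≤ f T := by linarith [hf (n + T)]

/-- The sequence `a t - ∑ i < t, u i` is antitone and bounded below. -/
lemma exists_tendsto_of_le_add_summable {a u : ℕ → ℝ} (ha : ∀ t, 0 ≤ a t) (hu : Summable u)
    (h : ∀ t, a (t + 1) ≤ a t + u t) : ∃ ℓ, Tendsto a atTop (𝓝 ℓ) := by
  set b : ℕ → ℝ := fun t => a t - ∑ i ∈ Finset.range t, u i
  have hpartial := hu.hasSum.tendsto_sum_nat
  have hanti : Antitone b := antitone_nat_of_succ_le fun t => by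
    simp only [b, Finset.sum_range_succ]
    linarith [h t]
  have hbdd : BddBelow (Set.range b) := by
    obtain ⟨M, hM⟩ := hpartial.bddAbove_range
    refine ⟨-M, ?_⟩
    rintro _ ⟨t, rfl⟩
    linarith [ha t, hM ⟨t, rfl⟩]
  refine ⟨_, ((tendsto_atTop_ciInf hanti hbdd).add hpartial).congr fun t => ?_⟩
  simp only [b, sub_add_cancel]

lemma eq_zero_of_tendsto_of_summable_mul {a η : ℕ → ℝ} {ℓ : ℝ} (ha : Tendsto a atTop (𝓝 ℓ))
    (hηa : Summable fun t => η t * a t) (hη : ¬Summable η) : ℓ = 0 := by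
  by_contra hℓ
  have hℓ' : 0 < |ℓ| := abs_pos.2 hℓ
  refine hη ((hηa.abs.mul_left (2 / |ℓ|)).of_norm_bounded_eventually ?_)
  rw [Nat.cofinite_eq_atTop]
  filter_upwards [ha.abs.eventually_const_lt (half_lt_self hℓ')] with t ht
  rw [Real.norm_eq_abs, abs_mul]
  calc |η t| = |η t| * (2 / |ℓ| * (|ℓ| / 2)) := by field_simp
    _ ≤ |η t| * (2 / |ℓ| * |a t|) := by gcongr
    _ = 2 / |ℓ| * (|η t| * |a t|) := by ring

lemma tendsto_zero_of_le_add_mul_of_summable_mul {a η : ℕ → ℝ} {C : ℝ} (ha : ∀ t, 0 ≤ a t)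
    (hηa : Summable fun t => η t * a t) (hη : ¬Summable η)
    (h : ∀ᶠ t in atTop, a (t + 1) ≤ a t + C * (η t * a t)) : Tendsto a atTop (𝓝 0) := by
  obtain ⟨T, hT⟩ := eventually_atTop.1 h
  obtain ⟨ℓ, hℓ⟩ := exists_tendsto_of_le_add_summable (a := fun t => a (t + T))
    (fun t => ha _) ((summable_nat_add_iff T).2 (hηa.mul_left C))
    fun t => by simpa only [Nat.add_right_comm t T 1] using hT (t + T) (Nat.le_add_left T t)
  rw [tendsto_add_atTop_iff_nat T] at hℓ
  rwa [eq_zero_of_tendsto_of_summable_mul hℓ hηa hη] at hℓ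

end RealSequences

section GradientMethods

variable {E : Type*} [NormedAddCommGroup E] [InnerProductSpace ℝ E] [CompleteSpace E]
  {F : E → ℝ} {L : ℝ}

/-- The descent lemma: `ψ s = F (p + s • v) - s ⟪∇F p, v⟫ - (L/2) s² ‖v‖²` has derivative
`⟪∇F (p + s • v) - ∇F p, v⟫ - L s ‖v‖² ≤ 0` on `[0, 1]`, so `ψ 1 ≤ ψ 0`. -/
theorem apply_add_le_of_lipschitz_gradient (hF : Differentiable ℝ F)
    (hLip : ∀ a b, ‖gradient F a - gradient F b‖ ≤ L * ‖a - b‖) (p v : E) :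
    F (p + v) ≤ F p + ⟪gradient F p, v⟫ + L / 2 * ‖v‖ ^ 2 := by
  have hline (s : ℝ) :
      HasDerivAt (fun s : ℝ => F (p + s • v)) ⟪gradient F (p + s • v), v⟫ s := by
    simpa [Function.comp_def] using (hF (p + s • v)).hasGradientAt.hasFDerivAt.comp_hasDerivAt s
      (((hasDerivAt_id s).smul_const v).const_add p)
  set ψ : ℝ → ℝ := fun s => F (p + s • v) - s * ⟪gradient F p, v⟫ - L / 2 * ‖v‖ ^ 2 * s ^ 2
  have hψ (s : ℝ) :
      HasDerivAt ψ (⟪gradient F (p + s • v) - gradient F p, v⟫ - L * ‖v‖ ^ 2 * s) s := by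
    refine (((hline s).sub ((hasDerivAt_id' s).mul_const ⟪gradient F p, v⟫)).sub
      ((hasDerivAt_pow 2 s).const_mul (L / 2 * ‖v‖ ^ 2))).congr_deriv ?_
    simp only [inner_sub_left]
    ring
  have hψ_anti : AntitoneOn ψ (Set.Icc 0 1) := by
    refine antitoneOn_of_hasDerivWithinAt_nonpos (convex_Icc 0 1)
      (continuous_iff_continuousAt.2 fun s => (hψ s).continuousAt).continuousOn
      (fun s _ => (hψ s).hasDerivWithinAt) fun s hs => ?_
    rw [interior_Icc] at hs
    have : ⟪gradient F (p + s • v) - gradient F p, v⟫ ≤ L * ‖v‖ ^ 2 * s :=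
      calc _ ≤ ‖gradient F (p + s • v) - gradient F p‖ * ‖v‖ := real_inner_le_norm _ _
        _ ≤ L * ‖p + s • v - p‖ * ‖v‖ := by gcongr; exact hLip _ _
        _ = L * ‖v‖ ^ 2 * s := by
          rw [add_sub_cancel_left, norm_smul, Real.norm_of_nonneg hs.1.le]
          ring
    linarith
  have := hψ_anti (by simp) (by simp) zero_le_one
  simp only [ψ, one_smul, zero_smul, add_zero, one_mul, zero_mul, one_pow, mul_one] at this
  linarith

variable (hL : 0 ≤ L) (hLip : ∀ a b, ‖gradient F a - gradient F b‖ ≤ L * ‖a - b‖)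
  {α₀ β : ℝ}
include hL hLip

lemma apply_add_smul_le_of_gradient_related (hF : Differentiable ℝ F) {p d : E} {η : ℝ} (hη : 0 ≤ η)
    (hcorr : ⟪gradient F p, d⟫ ≤ -α₀ * ‖gradient F p‖ ^ 2)
    (hnorm : ‖d‖ ≤ β * ‖gradient F p‖) :
    F (p + η • d) ≤ F p - η * (α₀ - L / 2 * β ^ 2 * η) * ‖gradient F p‖ ^ 2 := by
  have hinner : ⟪gradient F p, η • d⟫ ≤ η * (-α₀ * ‖gradient F p‖ ^ 2) := by
    rw [real_inner_smul_right]
    exact mul_le_mul_of_nonneg_left hcorr hη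
  have hsq : ‖η • d‖ ^ 2 ≤ η ^ 2 * (β * ‖gradient F p‖) ^ 2 := by
    rw [norm_smul, mul_pow, Real.norm_eq_abs, sq_abs]
    gcongr
  calc F (p + η • d) ≤ F p + ⟪gradient F p, η • d⟫ + L / 2 * ‖η • d‖ ^ 2 :=
        apply_add_le_of_lipschitz_gradient hF hLip p _
    _ ≤ F p + η * (-α₀ * ‖gradient F p‖ ^ 2) + L / 2 * (η ^ 2 * (β * ‖gradient F p‖) ^ 2) := by
        gcongr
    _ = _ := by ring

lemma norm_gradient_add_smul_le {p d : E} {η : ℝ} (hη : 0 ≤ η)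
    (hnorm : ‖d‖ ≤ β * ‖gradient F p‖) :
    ‖gradient F (p + η • d)‖ ≤ (1 + L * β * η) * ‖gradient F p‖ :=
  calc ‖gradient F (p + η • d)‖
      ≤ ‖gradient F p‖ + ‖gradient F (p + η • d) - gradient F p‖ := norm_le_norm_add_norm_sub' _ _
    _ ≤ ‖gradient F p‖ + L * (η * (β * ‖gradient F p‖)) := by
        gcongr
        calc _ ≤ L * ‖p + η • d - p‖ := hLip _ _
          _ ≤ _ := by
            rw [add_sub_cancel_left, norm_smul, Real.norm_of_nonneg hη]
            gcongr
    _ = _ := by ring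

theorem tendsto_of_gradient_related (hF : Differentiable ℝ F) (hF_nonneg : ∀ x, 0 ≤ F x)
    (hα₀ : 0 < α₀) (hβ : 0 ≤ β) {x d : ℕ → E} {η : ℕ → ℝ} (hη_nonneg : ∀ t, 0 ≤ η t)
    (hη_lim : Tendsto η atTop (𝓝 0)) (hη_div : ¬Summable η)
    (hstep : ∀ t, x (t + 1) = x t + η t • d t)
    (hcorr : ∀ t, ⟪gradient F (x t), d t⟫ ≤ -α₀ * ‖gradient F (x t)‖ ^ 2)
    (hnorm : ∀ t, ‖d t‖ ≤ β * ‖gradient F (x t)‖) :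
    Tendsto (fun t => ‖x (t + 1) - x t‖) atTop (𝓝 0) ∧
      Tendsto (fun t => ‖gradient F (x t)‖) atTop (𝓝 0) := by
  set g : ℕ → ℝ := fun t => ‖gradient F (x t)‖
  have hsmall : ∀ᶠ t in atTop, L * β ^ 2 * η t ≤ α₀ ∧ L * β * η t ≤ 1 := by
    have hlim (c : ℝ) : Tendsto (fun t => c * η t) atTop (𝓝 0) := by
      simpa using hη_lim.const_mul c
    exact ((hlim _).eventually_le_const hα₀).and ((hlim _).eventually_le_const one_pos)
  have hsum : Summable fun t => η t * g t ^ 2 := by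
    refine (summable_mul_left_iff (half_pos hα₀).ne').1 <| summable_of_eventually_le_sub_succ
      (fun t => hF_nonneg (x t)) (fun t => by have := hη_nonneg t; positivity) ?_
    filter_upwards [hsmall] with t ht
    have hdesc := apply_add_smul_le_of_gradient_related hL hLip hF (hη_nonneg t) (hcorr t) (hnorm t)
    rw [← hstep] at hdesc
    have hηg : 0 ≤ η t * g t ^ 2 := by have := hη_nonneg t; positivity
    nlinarith [mul_le_mul_of_nonneg_left ht.1 hηg]
  have hg_sq : Tendsto (fun t => g t ^ 2) atTop (𝓝 0) := by
    refine tendsto_zero_of_le_add_mul_of_summable_mul (C := 3 * L * β) (fun t => sq_nonneg _)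
      hsum hη_div ?_
    filter_upwards [hsmall] with t ht
    have hgrad := norm_gradient_add_smul_le hL hLip (hη_nonneg t) (hnorm t)
    rw [← hstep] at hgrad
    have hc : 0 ≤ L * β * η t := by have := hη_nonneg t; positivity
    calc g (t + 1) ^ 2 ≤ ((1 + L * β * η t) * g t) ^ 2 := by gcongr
      _ = g t ^ 2 + (2 + L * β * η t) * (L * β * η t) * g t ^ 2 := by ring
      _ ≤ g t ^ 2 + 3 * (L * β * η t) * g t ^ 2 := by gcongr; linarith [ht.2]
      _ = g t ^ 2 + 3 * L * β * (η t * g t ^ 2) := by ring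
  have hg : Tendsto g atTop (𝓝 0) := by
    simpa [g, Real.sqrt_sq (norm_nonneg _)] using hg_sq.sqrt
  refine ⟨squeeze_zero (fun t => norm_nonneg _) (fun t => ?_)
    (by simpa using hη_lim.mul (hg.const_mul β)), hg⟩
  rw [hstep, add_sub_cancel_left, norm_smul, Real.norm_of_nonneg (hη_nonneg t)]
  exact mul_le_mul_of_nonneg_left (hnorm t) (hη_nonneg t)

end GradientMethods

lemma tendsto_div_one_add_rpow_atTop (η₀ : ℝ) {α : ℝ} (hα : 0 < α) :
    Tendsto (fun t : ℕ => η₀ / (1 + t) ^ α) atTop (𝓝 0) :=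
  tendsto_const_nhds.div_atTop <| (tendsto_rpow_atTop hα).comp <|
    tendsto_atTop_add_const_left _ 1 tendsto_natCast_atTop_atTop

lemma not_summable_div_one_add_rpow {η₀ α : ℝ} (hη₀ : η₀ ≠ 0) (hα : α ≤ 1) :
    ¬Summable fun t : ℕ => η₀ / (1 + t) ^ α := by
  intro h
  have : Summable fun n : ℕ => 1 / (n : ℝ) ^ α := by
    rw [← summable_nat_add_iff 1]
    refine (h.mul_left η₀⁻¹).congr fun t => ?_
    push_cast
    field_simp
    ring_nf
  exact (Real.summable_one_div_nat_rpow.1 this).not_ge hα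

/-- Main Convergence Theorem of the AICL analysis: for a nonnegative loss `F`
with `L`-Lipschitz gradient (A3), gradient-related attack directions
(`⟪∇F xₜ, dₜ⟫ ≤ -α₀·‖∇F xₜ‖²` and `‖dₜ‖ ≤ β·‖∇F xₜ‖`, A4), and step sizes
`η t = η₀/(1+t)^α` with `η₀ > 0`, `1/2 < α ≤ 1` (A5), the AICL iterations
converge: `‖x (t+1) - x t‖ → 0` and `‖∇F (x t)‖ → 0`. -/
theorem aicl_main_convergence
    (dim : ℕ) (F : EuclideanSpace ℝ (Fin dim) → ℝ) (L α₀ β η₀ α : ℝ)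
    (hL : 0 < L) (hα₀ : 0 < α₀) (hβ : 0 < β)
    (hη₀ : 0 < η₀) (hα₁ : 1 / 2 < α) (hα₂ : α ≤ 1)
    (hF : Differentiable ℝ F) (hF_nonneg : ∀ x, 0 ≤ F x)
    (hLip : ∀ x y, ‖gradient F x - gradient F y‖ ≤ L * ‖x - y‖)
    (x : ℕ → EuclideanSpace ℝ (Fin dim))
    (dvec : ℕ → EuclideanSpace ℝ (Fin dim)) (η : ℕ → ℝ)
    (hη : ∀ t : ℕ, η t = η₀ / ((1 : ℝ) + t) ^ α)
    (hstep : ∀ t, x (t + 1) = x t + η t • dvec t)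
    (hcorr : ∀ t, ⟪gradient F (x t), dvec t⟫ ≤ -α₀ * ‖gradient F (x t)‖ ^ 2)
    (hnorm : ∀ t, ‖dvec t‖ ≤ β * ‖gradient F (x t)‖) :
    Tendsto (fun t => ‖x (t + 1) - x t‖) atTop (nhds 0) ∧
      Tendsto (fun t => ‖gradient F (x t)‖) atTop (nhds 0) := by
  obtain rfl : η = fun t : ℕ => η₀ / ((1 : ℝ) + t) ^ α := funext hη
  exact tendsto_of_gradient_related hL.le hLip hF hF_nonneg hα₀ hβ.le (fun t => by positivity)
    (tendsto_div_one_add_rpow_atTop η₀ (by linarith)) (not_summable_div_one_add_rpow hη₀.ne' hα₂)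
    hstep hcorr hnorm
end
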